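/- arXiv:2409.02206 — 5 statements merged into one kernel-verified Lean document; each statement's English description precedes it below -/
import Mathlib

section
/- For any Boolean function $f: \{0,1\}^d \to \{0,1\}$, the directed influence satisfies $I^+_f \ge \varepsilon_f$, where $\varepsilon_f$ is the distance of $f$ to monotonicity. -/
/-!
View `f` as a real-valued function on the cube. Averaging a function `h` in direction `i` replaces
both endpoints of every edge in direction `i` on which `h` decreases by their mean. This moves `h`
in `ℓ¹` by exactly its total decrease along direction `i`, removes that decrease, and, by a
four-point inequality on each square, increases the decrease along no other direction. Averaging
once in every direction therefore turns `f` into a monotone `H` with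
`‖f - H‖₁ ≤ #violated edges`. Finally, for `t` uniform in `[0, 1]` the expected number of points
where `f` disagrees with the monotone function `[t ≤ H]` is `‖f - H‖₁`, so some threshold does at
least as well.
-/

open scoped Classical

/-- Vertices of the `d`-dimensional hypercube. -/
abbrev Vtx (d : ℕ) := Fin d → Bool

/-- Hamming weight. -/
noncomputable def wt {d : ℕ} (x : Vtx d) : ℕ := (Finset.univ.filter (fun i => x i = true)).card

/-- Coordinatewise order on the hypercube. -/
def hle {d : ℕ} (x y : Vtx d) : Prop := ∀ i, x i = true → y i = true

/-- Strict coordinatewise order. -/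
def hlt {d : ℕ} (x y : Vtx d) : Prop := hle x y ∧ x ≠ y

/-- Directed hypercube edge: `y` is obtained from `x` by flipping one `0` to `1`. -/
def IsEdge {d : ℕ} (x y : Vtx d) : Prop := hle x y ∧ wt y = wt x + 1

/-- The `k`-th layer: vertices of Hamming weight `k`. -/
noncomputable def layer (d k : ℕ) : Finset (Vtx d) := Finset.univ.filter (fun x => wt x = k)

/-- The (directed) edges traversed by a path, given as a list of vertices. -/
def edgesL {α : Type*} (p : List α) : List (α × α) := p.zip p.tail

/-- A matched pair: a bijection `φ : A → B` with `a ≺ φ a`. -/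
def MatchedFrom {d : ℕ} (A B : Finset (Vtx d)) (φ : Vtx d → Vtx d) : Prop :=
  Set.BijOn φ ↑A ↑B ∧ ∀ s ∈ A, hlt s (φ s)

/-- Monotone Boolean function on the hypercube. -/
def MonotoneB {d : ℕ} (f : Vtx d → Bool) : Prop := ∀ x y, hle x y → f x = true → f y = true

/-- The violated edges of `f`: hypercube edges `(x,y)` with `f x = 1 > 0 = f y`. -/
noncomputable def violatedEdges (d : ℕ) (f : Vtx d → Bool) : Finset (Vtx d × Vtx d) :=
  Finset.univ.filter (fun e => IsEdge e.1 e.2 ∧ f e.1 = true ∧ f e.2 = false)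

open Function MeasureTheory
open scoped Finset

section ThresholdRounding

lemma measurableSet_ne_decide_le (b : Bool) (c : ℝ) :
    MeasurableSet {t : ℝ | b ≠ decide (t ≤ c)} := by
  cases b
  · convert (measurableSet_Iic (a := c)) using 1; ext t; simp
  · convert (measurableSet_Ioi (a := c)) using 1; ext t; simp

lemma setIntegral_indicator_ne_decide_le (b : Bool) {c : ℝ} (hc : c ∈ Set.Icc (0 : ℝ) 1) :
    ∫ t in Set.Icc (0 : ℝ) 1, {t | b ≠ decide (t ≤ c)}.indicator 1 t = |(b.toNat : ℝ) - c| := by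
  rw [integral_indicator_one (measurableSet_ne_decide_le b c),
    measureReal_restrict_apply (measurableSet_ne_decide_le b c)]
  cases b
  · have : {t : ℝ | false ≠ decide (t ≤ c)} ∩ Set.Icc 0 1 = Set.Icc 0 c := by
      ext t; simp only [Set.mem_inter_iff, Set.mem_ofPred_eq, Set.mem_Icc]; grind
    rw [this, Real.volume_real_Icc_of_le hc.1]
    simp [abs_of_nonneg hc.1]
  · have : {t : ℝ | true ≠ decide (t ≤ c)} ∩ Set.Icc 0 1 = Set.Ioc c 1 := by
      ext t; simp only [Set.mem_inter_iff, Set.mem_ofPred_eq, Set.mem_Icc, Set.mem_Ioc]; grind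
    rw [this, Real.volume_real_Ioc_of_le hc.2]
    simp [abs_of_nonneg (sub_nonneg.2 hc.2)]

variable {α : Type*} [Fintype α] [Preorder α]

lemma exists_monotone_bool_card_ne_le_of_mem_Icc (f : α → Bool) {h : α → ℝ} (hh : Monotone h)
    (h01 : ∀ x, h x ∈ Set.Icc (0 : ℝ) 1) :
    ∃ g : α → Bool, Monotone g ∧
      (#{x | f x ≠ g x} : ℝ) ≤ ∑ x, |((f x).toNat : ℝ) - h x| := by
  let F : ℝ → ℝ := fun t => ∑ x, {t | f x ≠ decide (t ≤ h x)}.indicator 1 t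
  have hint (x : α) :
      IntegrableOn ({t | f x ≠ decide (t ≤ h x)}.indicator 1) (Set.Icc (0 : ℝ) 1) :=
    (integrable_const (1 : ℝ)).indicator (measurableSet_ne_decide_le (f x) (h x))
  obtain ⟨t, -, ht⟩ := exists_le_setAverage (f := F) (by simp) (by simp)
    (integrable_finsetSum _ fun x _ => hint x)
  refine ⟨fun x => decide (t ≤ h x), fun x y hxy => ?_, ?_⟩
  · simp only [Bool.le_iff_imp, decide_eq_true_eq]
    exact fun htx => htx.trans (hh hxy)
  calc (#{x | f x ≠ decide (t ≤ h x)} : ℝ) = F t := by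
        simp [F, Finset.card_filter, Set.indicator_apply]
    _ ≤ ∫ t in Set.Icc 0 1, F t := by simpa [setAverage_eq] using ht
    _ = ∑ x, |((f x).toNat : ℝ) - h x| := by
        rw [integral_finsetSum _ fun x _ => hint x]
        exact Finset.sum_congr rfl fun x _ => setIntegral_indicator_ne_decide_le (f x) (h01 x)

lemma abs_toNat_sub_clamp_le (b : Bool) (c : ℝ) :
    |(b.toNat : ℝ) - max 0 (min 1 c)| ≤ |(b.toNat : ℝ) - c| := by
  cases b <;> simp only [Bool.toNat_false, Bool.toNat_true, Nat.cast_zero, Nat.cast_one, abs_le] <;>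
    grind

lemma exists_monotone_bool_card_ne_le (f : α → Bool) {h : α → ℝ} (hh : Monotone h) :
    ∃ g : α → Bool, Monotone g ∧
      (#{x | f x ≠ g x} : ℝ) ≤ ∑ x, |((f x).toNat : ℝ) - h x| := by
  obtain ⟨g, hg, hfg⟩ := exists_monotone_bool_card_ne_le_of_mem_Icc f
    (monotone_const.max (monotone_const.min hh))
    (fun x => ⟨le_max_left _ _, max_le zero_le_one (min_le_left _ _)⟩)
  exact ⟨g, hg, hfg.trans (Finset.sum_le_sum fun x _ => abs_toNat_sub_clamp_le (f x) (h x))⟩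

end ThresholdRounding

section AveragePair

variable {K : Type*} [Field K] [LinearOrder K] [IsStrictOrderedRing K]

def averagePair (a c : K) : K × K :=
  if a ≤ c then (a, c) else ((a + c) / 2, (a + c) / 2)

omit [IsStrictOrderedRing K] in
lemma averagePair_fst_le_snd (a c : K) : (averagePair a c).1 ≤ (averagePair a c).2 := by
  unfold averagePair
  split_ifs <;> simp [*]

lemma abs_sub_averagePair_fst_add_abs_sub_averagePair_snd (a c : K) :
    |a - (averagePair a c).1| + |c - (averagePair a c).2| = (a - c)⁺ := by
  unfold averagePair
  split_ifs with h
  · simp [posPart_eq_zero.2 (sub_nonpos.2 h)]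
  · rw [posPart_eq_self.2 (by linarith), abs_of_nonneg (by linarith), abs_of_nonpos (by linarith)]
    ring

/-- `(a, c)` and `(b, e)` are parallel edges of a square, `(a, b)` and `(c, e)` the other two. -/
lemma posPart_averagePair_fst_sub_add_posPart_averagePair_snd_sub_le (a b c e : K) :
    ((averagePair a c).1 - (averagePair b e).1)⁺ + ((averagePair a c).2 - (averagePair b e).2)⁺
      ≤ (a - b)⁺ + (c - e)⁺ := by
  unfold averagePair
  split_ifs <;> simp only [posPart_def, max_def] <;> split_ifs <;> linarith

end AveragePair

section BoolCube

variable {ι : Type*} [DecidableEq ι]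

noncomputable def averageAlong (i : ι) (h : (ι → Bool) → ℝ) (x : ι → Bool) : ℝ :=
  let p := averagePair (h (update x i false)) (h (update x i true))
  if x i then p.2 else p.1

noncomputable def averageAll (l : List ι) (h : (ι → Bool) → ℝ) : (ι → Bool) → ℝ :=
  l.foldr averageAlong h

lemma averageAlong_of_eq_false {i : ι} {x : ι → Bool} (h : (ι → Bool) → ℝ) (hx : x i = false) :
    averageAlong i h x = (averagePair (h x) (h (update x i true))).1 := by
  simp [averageAlong, hx, (update_eq_self_iff (f := x)).2 hx.symm]

lemma averageAlong_update_true {i : ι} {x : ι → Bool} (h : (ι → Bool) → ℝ) (hx : x i = false) :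
    averageAlong i h (update x i true) = (averagePair (h x) (h (update x i true))).2 := by
  simp [averageAlong, (update_eq_self_iff (f := x)).2 hx.symm]

variable [Fintype ι]

lemma sum_eq_sum_filter_add_update {M : Type*} [AddCommMonoid M] (i : ι)
    (G : (ι → Bool) → M) :
    ∑ x, G x = ∑ x with x i = false, (G x + G (update x i true)) := by
  rw [Finset.sum_add_distrib, ← Finset.sum_filter_add_sum_filter_not Finset.univ (· i = false)]
  congr 1
  refine Finset.sum_nbij' (update · i false) (update · i true) ?_ ?_ ?_ ?_ ?_ <;> intro x hx
  all_goals simp only [Finset.mem_filter, Finset.mem_univ, true_and, Bool.not_eq_false] at hx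
  · simp
  · simp
  all_goals simp [(update_eq_self_iff (f := x)).2 hx.symm]

/-- Terms with `x i = true` vanish, so this is the total decrease of `h` along the edges in
direction `i`. -/
noncomputable def edgeViolation (i : ι) (h : (ι → Bool) → ℝ) : ℝ :=
  ∑ x, (h x - h (update x i true))⁺

lemma edgeViolation_nonneg (i : ι) (h : (ι → Bool) → ℝ) : 0 ≤ edgeViolation i h :=
  Finset.sum_nonneg fun _ _ => posPart_nonneg _

lemma le_update_of_edgeViolation_eq_zero {i : ι} {h : (ι → Bool) → ℝ}
    (h0 : edgeViolation i h = 0) (x : ι → Bool) : h x ≤ h (update x i true) :=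
  sub_nonpos.1 <| posPart_eq_zero.1 <|
    (Finset.sum_eq_zero_iff_of_nonneg fun _ _ => posPart_nonneg _).1 h0 x (Finset.mem_univ x)

lemma edgeViolation_toNat (f : (ι → Bool) → Bool) (i : ι) :
    edgeViolation i (fun x => ((f x).toNat : ℝ)) =
      #{x | f x = true ∧ f (update x i true) = false} := by
  rw [edgeViolation, Finset.natCast_card_filter]
  refine Finset.sum_congr rfl fun x _ => ?_
  cases f x <;> cases f (update x i true) <;> simp

lemma sum_abs_sub_averageAlong (i : ι) (h : (ι → Bool) → ℝ) :
    ∑ x, |h x - averageAlong i h x| = edgeViolation i h := by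
  rw [edgeViolation, sum_eq_sum_filter_add_update i, sum_eq_sum_filter_add_update i]
  refine Finset.sum_congr rfl fun x hx => ?_
  have hx : x i = false := (Finset.mem_filter.1 hx).2
  rw [averageAlong_of_eq_false h hx, averageAlong_update_true h hx,
    abs_sub_averagePair_fst_add_abs_sub_averagePair_snd, update_idem, sub_self, posPart_zero,
    add_zero]

lemma edgeViolation_averageAlong_self (i : ι) (h : (ι → Bool) → ℝ) :
    edgeViolation i (averageAlong i h) = 0 := by
  refine Finset.sum_eq_zero fun x _ => posPart_eq_zero.2 (sub_nonpos.2 ?_)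
  cases hx : x i
  · rw [averageAlong_of_eq_false h hx, averageAlong_update_true h hx]
    exact averagePair_fst_le_snd _ _
  · rw [(update_eq_self_iff (f := x)).2 hx.symm]

lemma edgeViolation_averageAlong_le (i j : ι) (h : (ι → Bool) → ℝ) :
    edgeViolation j (averageAlong i h) ≤ edgeViolation j h := by
  rcases eq_or_ne i j with rfl | hij
  · exact (edgeViolation_averageAlong_self i h).trans_le (edgeViolation_nonneg i h)
  rw [edgeViolation, edgeViolation, sum_eq_sum_filter_add_update i,
    sum_eq_sum_filter_add_update i]
  refine Finset.sum_le_sum fun x hx => ?_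
  have hx : x i = false := (Finset.mem_filter.1 hx).2
  have hxj : update x j true i = false := by rwa [update_of_ne hij]
  rw [update_comm hij, averageAlong_of_eq_false h hx, averageAlong_of_eq_false h hxj,
    averageAlong_update_true h hx, averageAlong_update_true h hxj]
  exact posPart_averagePair_fst_sub_add_posPart_averagePair_snd_sub_le _ _ _ _

lemma edgeViolation_averageAll_le (l : List ι) (h : (ι → Bool) → ℝ) (j : ι) :
    edgeViolation j (averageAll l h) ≤ edgeViolation j h := by
  induction l with
  | nil => rfl
  | cons i l ih => exact (edgeViolation_averageAlong_le i j _).trans ih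

lemma edgeViolation_averageAll_eq_zero {l : List ι} {j : ι} (hj : j ∈ l)
    (h : (ι → Bool) → ℝ) : edgeViolation j (averageAll l h) = 0 := by
  induction l with
  | nil => cases hj
  | cons i l ih =>
    rcases List.mem_cons.1 hj with rfl | hj
    · exact edgeViolation_averageAlong_self j _
    · exact le_antisymm ((edgeViolation_averageAlong_le i j _).trans (ih hj).le)
        (edgeViolation_nonneg j _)

lemma sum_abs_sub_averageAll_le (l : List ι) (h : (ι → Bool) → ℝ) :
    ∑ x, |h x - averageAll l h x| ≤ (l.map (edgeViolation · h)).sum := by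
  induction l with
  | nil => simp [averageAll]
  | cons i l ih =>
    calc ∑ x, |h x - averageAll (i :: l) h x|
        ≤ ∑ x, (|h x - averageAll l h x|
            + |averageAll l h x - averageAlong i (averageAll l h) x|) :=
          Finset.sum_le_sum fun x _ => abs_sub_le _ _ _
      _ = ∑ x, |h x - averageAll l h x| + edgeViolation i (averageAll l h) := by
          rw [Finset.sum_add_distrib, sum_abs_sub_averageAlong]
      _ ≤ ((i :: l).map (edgeViolation · h)).sum := by
          rw [List.map_cons, List.sum_cons, add_comm]
          exact add_le_add (edgeViolation_averageAll_le l h i) ih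

lemma monotone_of_le_update {β : Type*} [Preorder β] {h : (ι → Bool) → β}
    (hh : ∀ x i, h x ≤ h (update x i true)) : Monotone h := by
  have : LocallyFiniteOrder (ι → Bool) := Fintype.toLocallyFiniteOrder
  refine (monotone_iff_forall_covBy h).2 fun x y hxy => ?_
  obtain ⟨i, b, hb, rfl⟩ := Pi.covBy_iff_exists_right_eq.1 hxy
  obtain rfl : b = true := by simpa using hb.lt.ne_bot
  exact hh x i

end BoolCube

lemma monotoneB_iff_monotone {d : ℕ} {g : Vtx d → Bool} : MonotoneB g ↔ Monotone g := by
  simp only [MonotoneB, Monotone, hle, Pi.le_def, Bool.le_iff_imp]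

lemma isEdge_iff_exists_update {d : ℕ} {x y : Vtx d} :
    IsEdge x y ↔ ∃ i, x i = false ∧ y = update x i true := by
  let ones (z : Vtx d) : Finset (Fin d) := Finset.univ.filter (z · = true)
  have ones_update (z : Vtx d) (i : Fin d) : ones (update z i true) = insert i (ones z) := by
    ext k; by_cases hk : k = i <;> simp [ones, hk]
  constructor
  · rintro ⟨hxy, hwt⟩
    obtain ⟨i, hi, hins⟩ := Finset.exists_eq_insert_iff.2
      (⟨fun k hk => by simpa [ones] using hxy k (by simpa [ones] using hk), hwt.symm⟩ :
        ones x ⊆ ones y ∧ _)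
    refine ⟨i, by simpa [ones] using hi, funext fun k => Bool.eq_iff_iff.2 ?_⟩
    simpa [ones] using congrArg (k ∈ ·) (hins.symm.trans (ones_update x i).symm)
  · rintro ⟨i, hi, rfl⟩
    refine ⟨fun k hk => ?_, ?_⟩
    · by_cases hk' : k = i <;> simp [hk', hk]
    · change #(ones _) = #(ones x) + 1
      rw [ones_update, Finset.card_insert_of_notMem (by simp [ones, hi])]

lemma card_violatedEdges {d : ℕ} (f : Vtx d → Bool) :
    #(violatedEdges d f) = ∑ i, #{x | f x = true ∧ f (update x i true) = false} := by
  have hlow {i : Fin d} {x : Vtx d} (hp : f x = true ∧ f (update x i true) = false) :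
      x i = false := by
    by_contra hx
    simp [(update_eq_self_iff (f := x)).2 (Bool.eq_true_of_not_eq_false hx).symm] at hp
  rw [← Finset.card_sigma]
  symm
  refine Finset.card_bij (fun p _ => (p.2, update p.2 p.1 true)) ?_ ?_ ?_
  · rintro ⟨i, x⟩ hp
    simp only [Finset.mem_sigma, Finset.mem_filter, Finset.mem_univ, true_and] at hp
    simp only [violatedEdges, Finset.mem_filter, Finset.mem_univ, true_and]
    exact ⟨isEdge_iff_exists_update.2 ⟨i, hlow hp, rfl⟩, hp⟩
  · rintro ⟨i, x⟩ hp ⟨j, y⟩ - h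
    simp only [Finset.mem_sigma, Finset.mem_filter, Finset.mem_univ, true_and] at hp
    obtain ⟨rfl, h⟩ := Prod.mk.inj h
    obtain rfl : i = j := by
      by_contra hij
      simpa [update_of_ne hij, hlow hp] using congrFun h i
    rfl
  · rintro ⟨x, y⟩ he
    simp only [violatedEdges, Finset.mem_filter, Finset.mem_univ, true_and] at he
    obtain ⟨i, -, rfl⟩ := isEdge_iff_exists_update.1 he.1
    exact ⟨⟨i, x⟩, by simpa using he.2, rfl⟩

/-- **Directed Poincaré inequality** `I⁺_f ≥ ε_f`: there is a monotone function `g` whose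
distance to `f` is at most `2^{-d}` times the number of violated edges of `f`. -/
theorem directed_poincare (d : ℕ) (f : Vtx d → Bool) :
    ∃ g : Vtx d → Bool, MonotoneB g ∧
      ((Finset.univ.filter (fun x => f x ≠ g x)).card : ℚ) / 2 ^ d ≤
        ((violatedEdges d f).card : ℚ) / 2 ^ d := by
  let fR : Vtx d → ℝ := fun x => ((f x).toNat : ℝ)
  let H := averageAll (List.finRange d) fR
  have hH : Monotone H := monotone_of_le_update fun x i =>
    le_update_of_edgeViolation_eq_zero
      (edgeViolation_averageAll_eq_zero (List.mem_finRange i) fR) x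
  have hcost : ∑ x, |fR x - H x| ≤ #(violatedEdges d f) :=
    calc ∑ x, |fR x - H x| ≤ ((List.finRange d).map (edgeViolation · fR)).sum :=
          sum_abs_sub_averageAll_le _ _
      _ = #(violatedEdges d f) := by
        rw [← Fin.sum_univ_def, card_violatedEdges, Nat.cast_sum]
        exact Finset.sum_congr rfl fun i _ => edgeViolation_toNat f i
  obtain ⟨g, hg, hfg⟩ := exists_monotone_bool_card_ne_le f hH
  refine ⟨g, monotoneB_iff_monotone.2 hg, ?_⟩
  have : #{x | f x ≠ g x} ≤ #(violatedEdges d f) := by exact_mod_cast hfg.trans hcost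
  gcongr
end

section
/- Let $S \subseteq \{0,1\}^d$ and let $f$ be the indicator function of $S$. Then the directed volume of $S$ equals $\varepsilon_f \cdot 2^d$, where $\varepsilon_f$ is the distance of $f$ to monotonicity. That is, the maximum size of a set $S' \subseteq S$ admitting a bijection $\phi$ to some $T' \subseteq \overline{S}$ with $s \prec \phi(s)$ for all $s \in S'$ equals $2^d$ times the distance of the indicator function of $S$ to monotonicity. -/
open scoped Classical

/-- `S` has a directed-volume certificate of size `m`: a matched pair from a subset of `S`
to a subset of the complement of `S`. -/
def HasCert {d : ℕ} (S : Finset (Vtx d)) (m : ℕ) : Prop :=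
  ∃ S' T' : Finset (Vtx d), ∃ φ : Vtx d → Vtx d,
    S' ⊆ S ∧ (∀ t ∈ T', t ∉ S) ∧ S'.card = m ∧ MatchedFrom S' T' φ

/-- The indicator function of `S`. -/
noncomputable def indic {d : ℕ} (S : Finset (Vtx d)) : Vtx d → Bool :=
  fun x => if x ∈ S then true else false

/-!
A certificate is a matching in the bipartite violation graph whose edges are the pairs
`x ≺ y` with `x ∈ S`, `y ∉ S`. A monotone `g` disagrees with the indicator of `S` at an endpoint
of every violating pair, so no certificate is larger than the set of disagreements. Conversely,
König's theorem gives a vertex cover `C` of the violation graph no larger than some matching, and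
the upward closure of `S \ C` is monotone and disagrees with `S` only on `C`.
-/

namespace Finset

variable {ι α : Type*} [DecidableEq α]

theorem card_le_card_biUnion_disjSum {A : Finset ι} {t : ι → Finset α} {D : ℕ}
    (hall : ∀ B ⊆ A, #B ≤ #(B.biUnion t) + D) (s : Finset A) :
    #s ≤ #(s.biUnion fun i => (t i).disjSum (univ : Finset (Fin D))) := by
  obtain rfl | ⟨i₀, hi₀⟩ := s.eq_empty_or_nonempty
  · simp
  set B := s.map (Function.Embedding.subtype _)
  have hsub : (B.biUnion t).disjSum (univ : Finset (Fin D)) ⊆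
      s.biUnion fun i => (t i).disjSum univ := by
    rintro (a | b) h
    · simp only [B, inl_mem_disjSum, mem_biUnion, mem_map,
        Function.Embedding.coe_subtype] at h ⊢
      obtain ⟨_, ⟨i, hi, rfl⟩, ha⟩ := h
      exact ⟨i, hi, ha⟩
    · exact mem_biUnion.mpr ⟨i₀, hi₀, inr_mem_disjSum.mpr (mem_univ b)⟩
  calc #s = #B := (card_map _).symm
    _ ≤ #(B.biUnion t) + D := hall B (map_subtype_subset s)
    _ = #((B.biUnion t).disjSum (univ : Finset (Fin D))) := by simp
    _ ≤ _ := card_le_card hsub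

/-- Hall's theorem with deficiency `D`: apply Hall's theorem after adding `D` new vertices
adjacent to every `i ∈ A`, and keep the pairs not matched to a new vertex. -/
theorem exists_injOn_of_card_le_card_biUnion_add [Nonempty α] (A : Finset ι) (t : ι → Finset α)
    (D : ℕ) (hall : ∀ B ⊆ A, #B ≤ #(B.biUnion t) + D) :
    ∃ M ⊆ A, ∃ f : ι → α, Set.InjOn f M ∧ (∀ i ∈ M, f i ∈ t i) ∧ #A ≤ #M + D := by
  obtain ⟨g, hg_inj, hg_mem⟩ := (all_card_le_biUnion_card_iff_exists_injective
    fun i : A => (t i).disjSum (univ : Finset (Fin D))).mp (card_le_card_biUnion_disjSum hall)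
  set f : ι → α := fun i =>
    if h : i ∈ A then Sum.elim id (fun _ => Classical.arbitrary α) (g ⟨i, h⟩)
    else Classical.arbitrary α
  set L := A.attach.filter fun i => (g i).isLeft
  have hg_left : ∀ i ∈ L, g i = Sum.inl (f i) := by
    intro i hi
    obtain ⟨a, ha⟩ := Sum.isLeft_iff.mp (mem_filter.mp hi).2
    simp [f, ha]
  have hR : #(A.attach.filter fun i => ¬ (g i).isLeft) ≤ D := by
    refine (card_le_card_of_injOn g (t := (univ : Finset (Fin D)).map .inr) ?_
      hg_inj.injOn).trans (by simp)
    intro i hi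
    obtain ⟨b, hb⟩ := Sum.isRight_iff.mp (by simpa using (mem_filter.mp hi).2)
    simp [hb]
  refine ⟨L.map (Function.Embedding.subtype _), map_subtype_subset L, f, ?_, ?_, ?_⟩
  · rintro _ hi _ hj hij
    obtain ⟨i, hiL, rfl⟩ := mem_map.mp hi
    obtain ⟨j, hjL, rfl⟩ := mem_map.mp hj
    exact congrArg Subtype.val (hg_inj (by rw [hg_left i hiL, hg_left j hjL]; exact congrArg _ hij))
  · intro _ hi
    obtain ⟨i, hiL, rfl⟩ := mem_map.mp hi
    simpa [hg_left i hiL] using hg_mem i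
  · rw [card_map, ← card_attach (s := A), ← card_filter_add_card_filter_not (fun i => (g i).isLeft)]
    exact add_le_add_right hR _

/-- König's theorem: if `A₀ ⊆ A` has maximal deficiency `#A₀ - #N(A₀)`, then `(A \ A₀) ∪ N(A₀)`
is a vertex cover no larger than a matching. -/
theorem exists_injOn_and_cover_card_le [DecidableEq ι] [Nonempty α] (A : Finset ι)
    (t : ι → Finset α) :
    ∃ M ⊆ A, ∃ f : ι → α, Set.InjOn f M ∧ (∀ i ∈ M, f i ∈ t i) ∧
      ∃ (C : Finset ι) (C' : Finset α), #C + #C' ≤ #M ∧ ∀ i ∈ A, ∀ a ∈ t i, i ∈ C ∨ a ∈ C' := by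
  obtain ⟨A₀, hA₀, hmax⟩ := A.powerset.exists_max_image
    (fun B => (#B : ℤ) - #(B.biUnion t)) ⟨∅, empty_mem_powerset A⟩
  rw [mem_powerset] at hA₀
  have hN₀ : #(A₀.biUnion t) ≤ #A₀ := by
    have := hmax ∅ (empty_mem_powerset A)
    simp only [card_empty, biUnion_empty] at this
    omega
  obtain ⟨M, hMA, f, hf_inj, hf_mem, hM⟩ := exists_injOn_of_card_le_card_biUnion_add A t
    (#A₀ - #(A₀.biUnion t)) fun B hB => by have := hmax B (mem_powerset.mpr hB); omega
  refine ⟨M, hMA, f, hf_inj, hf_mem, A \ A₀, A₀.biUnion t, ?_, fun i hi a ha => ?_⟩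
  · rw [card_sdiff_of_subset hA₀]
    have := card_le_card hA₀
    omega
  · by_cases hi₀ : i ∈ A₀
    · exact .inr (mem_biUnion.mpr ⟨i, hi₀, ha⟩)
    · exact .inl (mem_sdiff.mpr ⟨hi, hi₀⟩)

end Finset

section Hypercube

open Finset

variable {d : ℕ} {S : Finset (Vtx d)}

theorem HasCert.le_card_filter_indic_ne {m : ℕ} (h : HasCert S m) {g : Vtx d → Bool}
    (hg : MonotoneB g) : m ≤ #(univ.filter fun x => indic S x ≠ g x) := by
  obtain ⟨S', T', φ, hS', hT', rfl, hbij, hφ⟩ := h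
  set E := univ.filter fun x => indic S x ≠ g x
  have hφS : ∀ s ∈ S', φ s ∉ S := fun s hs => hT' _ (hbij.mapsTo hs)
  have hφE : ∀ s ∈ S', s ∉ E → φ s ∈ E := by
    intro s hs hsE
    have hgs : g s = true := by simpa [E, indic, hS' hs] using hsE
    simp [E, indic, hφS s hs, hg s (φ s) (hφ s hs).1 hgs]
  refine card_le_card_of_injOn (fun s => if s ∈ E then s else φ s) (fun s hs => ?_) ?_
  · by_cases hsE : s ∈ E <;> simp [hsE, hφE s hs]
  · intro s hs s' hs' h
    by_cases hsE : s ∈ E <;> by_cases hs'E : s' ∈ E <;>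
      simp only [hsE, hs'E, if_true, if_false] at h
    · exact h
    · exact absurd (h ▸ hS' hs) (hφS s' hs')
    · exact absurd (h ▸ hS' hs') (hφS s hs)
    · exact hbij.injOn hs hs' h

theorem exists_monotoneB_card_filter_indic_ne_le (C : Finset (Vtx d))
    (hC : ∀ x ∈ S, ∀ y ∉ S, hlt x y → x ∈ C ∨ y ∈ C) :
    ∃ g : Vtx d → Bool, MonotoneB g ∧ #(univ.filter fun x => indic S x ≠ g x) ≤ #C := by
  refine ⟨fun x => decide (∃ z ∈ S, z ∉ C ∧ hle z x), ?_, card_le_card fun x hx => ?_⟩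
  · intro x y hxy hx
    simp only [decide_eq_true_eq] at hx ⊢
    obtain ⟨z, hzS, hzC, hzx⟩ := hx
    exact ⟨z, hzS, hzC, fun i hi => hxy i (hzx i hi)⟩
  · by_contra hxC
    refine (mem_filter.mp hx).2 ?_
    by_cases hxS : x ∈ S
    · simpa [indic, hxS] using ⟨x, hxS, hxC, fun i hi => hi⟩
    · simp only [indic, hxS, if_false, Bool.false_eq, decide_eq_false_iff_not, not_exists, not_and]
      intro z hzS hzC hzx
      exact (hC z hzS x hxS ⟨hzx, fun h => hxS (h ▸ hzS)⟩).elim hzC hxC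

variable (S) in
theorem exists_hasCert_and_monotoneB_card_filter_indic_ne_le :
    ∃ m, HasCert S m ∧
      ∃ g : Vtx d → Bool, MonotoneB g ∧ #(univ.filter fun x => indic S x ≠ g x) ≤ m := by
  obtain ⟨M, hMS, φ, hφ_inj, hφ_mem, C, C', hCM, hcover⟩ :=
    S.exists_injOn_and_cover_card_le fun x => univ.filter fun y => y ∉ S ∧ hlt x y
  simp only [mem_filter, mem_univ, true_and] at hφ_mem hcover
  refine ⟨#M, ⟨M, M.image φ, φ, hMS, ?_, rfl, ?_, fun s hs => (hφ_mem s hs).2⟩, ?_⟩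
  · simp only [mem_image]
    rintro _ ⟨s, hs, rfl⟩
    exact (hφ_mem s hs).1
  · rw [coe_image]
    exact hφ_inj.bijOn_image
  · obtain ⟨g, hg, hgC⟩ := exists_monotoneB_card_filter_indic_ne_le (C ∪ C')
      fun x hx y hy hxy => by
        rcases hcover x hx y ⟨hy, hxy⟩ with h | h
        · exact .inl (mem_union_left _ h)
        · exact .inr (mem_union_right _ h)
    exact ⟨g, hg, hgC.trans ((card_union_le C C').trans hCM)⟩

end Hypercube

/-- The directed volume of `S` equals `2^d` times the distance of the indicator of `S`
to monotonicity: if `n` is the maximum size of a certificate, and `ε` is the minimum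
(normalized) distance from `indic S` to a monotone function, then `n = ε · 2^d`. -/
theorem dirVol_eq_distance_to_monotonicity (d : ℕ) (S : Finset (Vtx d)) (n : ℕ)
    (hcert : HasCert S n) (hmax : ∀ m : ℕ, HasCert S m → m ≤ n)
    (ε : ℚ)
    (hatt : ∃ g : Vtx d → Bool, MonotoneB g ∧
      ((Finset.univ.filter (fun x => indic S x ≠ g x)).card : ℚ) / 2 ^ d = ε)
    (hmin : ∀ g : Vtx d → Bool, MonotoneB g →
      ε ≤ ((Finset.univ.filter (fun x => indic S x ≠ g x)).card : ℚ) / 2 ^ d) :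
    (n : ℚ) = ε * 2 ^ d := by
  obtain ⟨g, hg, hε⟩ := hatt
  obtain ⟨m, hm, g', hg', hg'm⟩ := exists_hasCert_and_monotoneB_card_filter_indic_ne_le S
  have h2d : (0 : ℚ) < 2 ^ d := by positivity
  apply le_antisymm
  · rw [← hε, div_mul_cancel₀ _ h2d.ne']
    exact_mod_cast hcert.le_card_filter_indic_ne hg
  · calc ε * 2 ^ d ≤ ((Finset.univ.filter fun x => indic S x ≠ g' x).card : ℚ) :=
          (le_div_iff₀ h2d).mp (hmin g' hg')
      _ ≤ n := by exact_mod_cast hg'm.trans (hmax m hm)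
end

section
/- Let $G$ be a finite directed graph with distinguished source $s$ and sink $t$, unit capacities on a set of 'internal' edges, and suppose there is an integral maximum flow of value $F$ and a minimum cut consisting of a vertex set $C$ (each of cut-cost 2, i.e., vertex capacity 2) and an edge set $F_E$ (each of cut-cost 1) with $2|C| + |F_E| = F$. Then any path decomposition $\mathcal{P}$ of an integral maximum flow satisfies: every path in $\mathcal{P}$ contains exactly one element of $C \cup F_E$ (exactly one cut vertex or exactly one cut edge, not both), every vertex of $C$ lies on exactly two paths of $\mathcal{P}$, and every edge of $F_E$ lies on exactly one path of $\mathcal{P}$. -/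
/-!
Count the incidences between the paths of `𝒫` and the elements of the cut. Every path meets the
cut, so there are at least `|𝒫|` incidences; every cut vertex lies on at most two paths and every
cut edge on at most one, so there are at most `2|C| + |F_E| = |𝒫|`. Both inequalities are
therefore tight, and tightness of each is one half of the conclusion.
-/

open scoped Classical

theorem List.Nodup.edgesL {α : Type*} {p : List α} (h : p.Nodup) : (edgesL p).Nodup := by
  refine List.Nodup.of_map Prod.snd ?_
  rw [_root_.edgesL, List.map_snd_zip (by simp)]
  exact h.sublist (List.tail_sublist p)

theorem List.Nodup.countP_mem_finset {β : Type*} [DecidableEq β] {l : List β} (h : l.Nodup)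
    (S : Finset β) : l.countP (· ∈ S) = ∑ x ∈ S, if x ∈ l then 1 else 0 := by
  rw [Finset.sum_boole, List.countP_eq_length_filter, ← List.toFinset_card_of_nodup (h.filter _)]
  congr 1
  ext x
  simp [and_comm]

theorem Multiset.sum_map_countP_mem_finset {β γ : Type*} [DecidableEq γ] (P : Multiset β)
    (f : β → List γ) [∀ x, DecidablePred (x ∈ f ·)] (hP : ∀ p ∈ P, (f p).Nodup) (S : Finset γ) :
    (P.map fun p => (f p).countP (· ∈ S)).sum = ∑ x ∈ S, P.countP (x ∈ f ·) := by
  induction P using Multiset.induction_on with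
  | empty => simp
  | cons p P ih =>
    rw [Multiset.map_cons, Multiset.sum_cons, ih fun q hq => hP q (Multiset.mem_cons_of_mem hq),
      (hP p (Multiset.mem_cons_self p P)).countP_mem_finset, ← Finset.sum_add_distrib]
    simp only [Multiset.countP_cons]
    exact Finset.sum_congr rfl fun x _ => by split_ifs <;> omega

theorem Multiset.countP_mem_le_one_of_pairwise {β γ : Type*} {P : Multiset β} {f : β → List γ}
    (h : P.Pairwise fun p q => ∀ e ∈ f p, e ∉ f q) (e : γ) [DecidablePred (e ∈ f ·)] :
    P.countP (e ∈ f ·) ≤ 1 := by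
  obtain ⟨l, rfl, hl⟩ := h
  rw [Multiset.coe_countP, List.countP_eq_length_filter]
  have hpw := hl.filter fun p => decide (e ∈ f p)
  have hmem : ∀ p ∈ l.filter fun p => decide (e ∈ f p), e ∈ f p := by simp
  rcases hfl : l.filter fun p => decide (e ∈ f p) with _ | ⟨a, _ | ⟨b, m⟩⟩
  · simp
  · simp
  · rw [hfl] at hpw hmem
    exact absurd (hmem b (by simp)) ((List.rel_of_pairwise_cons hpw (by simp)) e (hmem a (by simp)))

theorem Multiset.eq_one_and_eq_cap_of_card_eq_sum_cap {β γ : Type*} {P : Multiset β}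
    {w : β → ℕ} {S : Finset γ} {c cap : γ → ℕ} (hrow : ∀ p ∈ P, 1 ≤ w p)
    (hcol : ∀ x ∈ S, c x ≤ cap x) (hcount : (P.map w).sum = ∑ x ∈ S, c x)
    (hval : Multiset.card P = ∑ x ∈ S, cap x) :
    (∀ p ∈ P, w p = 1) ∧ ∀ x ∈ S, c x = cap x := by
  have hlow : Multiset.card P ≤ (P.map w).sum := by
    simpa using Multiset.sum_map_le_sum_map (fun _ => 1) w hrow
  have hup : ∑ x ∈ S, c x ≤ ∑ x ∈ S, cap x := Finset.sum_le_sum hcol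
  refine ⟨fun p hp => ?_, (Finset.sum_eq_sum_iff_of_le hcol).1 (by omega)⟩
  by_contra hne
  have hlt : Multiset.card P < (P.map w).sum := by
    simpa using Multiset.sum_lt_sum (f := fun _ => 1) hrow ⟨p, hp, by have := hrow p hp; omega⟩
  omega

theorem complementary_slackness_general {α : Type*} [DecidableEq α]
    (G : α → α → Prop) (s t : α)
    (C : Finset α) (FE : Finset (α × α))
    (hCint : ∀ v ∈ C, v ≠ s ∧ v ≠ t)
    (hcut : ∀ p : List α, p.Chain' G → p.head? = some s → p.getLast? = some t →
      (∃ v ∈ C, v ∈ p) ∨ (∃ e ∈ FE, e ∈ edgesL p))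
    (P : Multiset (List α))
    (hpaths : ∀ p ∈ P, p.Chain' G ∧ p.Nodup ∧ p.head? = some s ∧ p.getLast? = some t)
    (hedisj : P.Pairwise (fun p q => ∀ e ∈ edgesL p, e ∉ edgesL q))
    (hvtx : ∀ v : α, v ≠ s → v ≠ t → (P.countP (fun p => v ∈ p)) ≤ 2)
    (hval : Multiset.card P = 2 * C.card + FE.card) :
    (∀ p ∈ P, (p.countP (fun v => decide (v ∈ C))) +
        ((edgesL p).countP (fun e => decide (e ∈ FE))) = 1) ∧
    (∀ v ∈ C, (P.countP (fun p => v ∈ p)) = 2) ∧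
    (∀ e ∈ FE, (P.countP (fun p => e ∈ edgesL p)) = 1) := by
  have hrow : ∀ p ∈ P, 1 ≤ p.countP (· ∈ C) + (edgesL p).countP (· ∈ FE) := by
    intro p hp
    obtain ⟨hchain, -, hhead, hlast⟩ := hpaths p hp
    rcases hcut p hchain hhead hlast with ⟨v, hvC, hvp⟩ | ⟨e, heFE, hep⟩
    · have : 0 < p.countP (· ∈ C) := List.countP_pos_iff.2 ⟨v, hvp, by simpa using hvC⟩
      omega
    · have : 0 < (edgesL p).countP (· ∈ FE) := List.countP_pos_iff.2 ⟨e, hep, by simpa using heFE⟩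
      omega
  -- Cut vertices and cut edges are indexed together by `C.disjSum FE`, with capacities `2` and `1`.
  have hcount : (P.map fun p => p.countP (· ∈ C) + (edgesL p).countP (· ∈ FE)).sum =
      ∑ x ∈ C.disjSum FE,
        Sum.elim (fun v => P.countP (v ∈ ·)) (fun e => P.countP (e ∈ edgesL ·)) x := by
    rw [Multiset.sum_map_add, Finset.sum_disjSum,
      P.sum_map_countP_mem_finset (fun p => p) (fun p hp => (hpaths p hp).2.1),
      P.sum_map_countP_mem_finset edgesL (fun p hp => (hpaths p hp).2.1.edgesL)]
    rfl
  obtain ⟨hrows, hcols⟩ := Multiset.eq_one_and_eq_cap_of_card_eq_sum_cap hrow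
    (cap := Sum.elim (fun _ => 2) (fun _ => 1))
    (by
      rintro (v | e) hx
      · obtain ⟨hvs, hvt⟩ := hCint v (Finset.inl_mem_disjSum.1 hx)
        exact hvtx v hvs hvt
      · exact Multiset.countP_mem_le_one_of_pairwise hedisj e)
    hcount (by simp [hval, mul_comm])
  exact ⟨hrows, fun v hv => hcols (.inl v) (Finset.inl_mem_disjSum.2 hv),
    fun e he => hcols (.inr e) (Finset.inr_mem_disjSum.2 he)⟩

/-- **Complementary slackness for mixed vertex/edge cuts.** In a finite directed graph with
source `s`, sink `t`, unit capacities on internal edges and capacity `2` on internal vertices: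
if `(C, FE)` is a valid cut of cost `2|C| + |FE|` equal to the value `|𝒫|` of an integral
maximum flow decomposed into a multiset `𝒫` of (simple) `s`-`t` paths that are pairwise
edge-disjoint with every internal vertex on at most two paths, then every path of `𝒫`
contains exactly one cut element, every vertex of `C` lies on exactly two paths, and every
edge of `FE` lies on exactly one path. -/
theorem complementary_slackness {α : Type*} [Fintype α] [DecidableEq α]
    (G : α → α → Prop) (s t : α)
    (C : Finset α) (FE : Finset (α × α))
    (hCint : ∀ v ∈ C, v ≠ s ∧ v ≠ t)
    (hFEedges : ∀ e ∈ FE, G e.1 e.2)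
    (hcut : ∀ p : List α, p.Chain' G → p.head? = some s → p.getLast? = some t →
      (∃ v ∈ C, v ∈ p) ∨ (∃ e ∈ FE, e ∈ edgesL p))
    (P : Multiset (List α))
    (hpaths : ∀ p ∈ P, p.Chain' G ∧ p.Nodup ∧ p.head? = some s ∧ p.getLast? = some t)
    (hedisj : P.Pairwise (fun p q => ∀ e ∈ edgesL p, e ∉ edgesL q))
    (hvtx : ∀ v : α, v ≠ s → v ≠ t → (P.countP (fun p => v ∈ p)) ≤ 2)
    (hval : Multiset.card P = 2 * C.card + FE.card) :
    (∀ p ∈ P, (p.countP (fun v => decide (v ∈ C))) +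
        ((edgesL p).countP (fun e => decide (e ∈ FE))) = 1) ∧
    (∀ v ∈ C, (P.countP (fun p => v ∈ p)) = 2) ∧
    (∀ e ∈ FE, (P.countP (fun p => e ∈ edgesL p)) = 1) :=
  complementary_slackness_general G s t C FE hCint hcut P hpaths hedisj hvtx hval
end

section
/- Suppose the following routing statement holds for parameter $r \ge 1$: for every $S \subseteq \{0,1\}^d$ with separation distance $r$, the directed hypercube flow network with unit edge capacities and vertex capacities $r^2$ admits a flow of value at least $C \cdot r \cdot \mathrm{vol}^+(S)$ from $S$ to $\overline{S}$ (for an absolute constant $C > 0$). Then for every Boolean function $f:\{0,1\}^d \to \{0,1\}$ and every bicoloring $\chi$ of the hypercube edges with colors $\{0,1\}$, one has $2^{-d} \sum_{x} \sqrt{\mathrm{Inf}^{+,\chi}_f(x)} \ge (C/2)\, \varepsilon_f$, where $\mathrm{Inf}^{+,\chi}_f(x)$ is the number of violated edges incident to $x$ whose color equals $f(x)$. -/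
/-!
Let `S` be the set of ones of `f` and `n = vol⁺(S)`. A maximum matching `(S', T'; φ)` from `S`
to its complement meets every violated pair `a ≺ b`, so changing `f` on the `2n` matched
vertices leaves a monotone function; hence `ε_f ≤ 2n / 2^d`. For `n > 0` the average gap of an
optimal certificate is the separation distance `r ≥ 1`, and the routing hypothesis gives at
least `C r n` edge-disjoint paths from `S` to its complement with vertex load at most `r²`.
Each path crosses a violated edge, and these edges are distinct; charging each of them to the
endpoint `x` whose value `f x` equals its colour, vertex `x` receives `k ≤ Inf⁺χ_f(x)` paths
and `k ≤ r²`, so `k ≤ r √(Inf⁺χ_f(x))`. Summing over `x` gives `C r n ≤ r ∑ₓ √(Inf⁺χ_f(x))`.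
-/

open scoped Classical

/-- `(S',T';φ)` is a directed-volume certificate-candidate of `S` of size `m`. -/
def CertOf {d : ℕ} (S S' T' : Finset (Vtx d)) (φ : Vtx d → Vtx d) (m : ℕ) : Prop :=
  S' ⊆ S ∧ (∀ t ∈ T', t ∉ S) ∧ S'.card = m ∧ MatchedFrom S' T' φ

/-- `n` is the directed volume `vol⁺(S)`. -/
def VolIs {d : ℕ} (S : Finset (Vtx d)) (n : ℕ) : Prop :=
  (∃ S' T' φ, CertOf S S' T' φ n) ∧
  (∀ (m : ℕ) S' T' φ, CertOf S S' T' φ m → m ≤ n)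

/-- Total weight gap `∑_{s ∈ S'} (‖φ s‖₁ - ‖s‖₁)` of a matched pair. -/
noncomputable def gap {d : ℕ} (S' : Finset (Vtx d)) (φ : Vtx d → Vtx d) : ℝ :=
  ∑ s ∈ S', ((wt (φ s) : ℝ) - (wt s : ℝ))

/-- `r` is the separation distance of `S` (whose directed volume is `n`): the minimum,
over directed-volume certificates, of the average weight gap. -/
def SepIs {d : ℕ} (S : Finset (Vtx d)) (n : ℕ) (r : ℝ) : Prop :=
  (∃ S' T' φ, CertOf S S' T' φ n ∧ gap S' φ = r * n) ∧
  (∀ S' T' φ, CertOf S S' T' φ n → r * n ≤ gap S' φ)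

/-- The number of violated edges of `f` incident to `x` whose `χ`-color equals `f x`. -/
noncomputable def colInf {d : ℕ} (f : Vtx d → Bool) (χ : Vtx d × Vtx d → Bool) (x : Vtx d) : ℕ :=
  (Finset.univ.filter (fun e : Vtx d × Vtx d =>
    IsEdge e.1 e.2 ∧ f e.1 = true ∧ f e.2 = false ∧ (e.1 = x ∨ e.2 = x) ∧ χ e = f x)).card

open Finset

section Paths

variable {α : Type*}

@[simp] lemma edgesL_cons_cons (a b : α) (l : List α) :
    edgesL (a :: b :: l) = (a, b) :: edgesL (b :: l) := rfl

lemma mem_of_mem_edgesL {p : List α} {e : α × α} (he : e ∈ edgesL p) : e.1 ∈ p ∧ e.2 ∈ p :=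
  ⟨(List.of_mem_zip he).1, List.mem_of_mem_tail (List.of_mem_zip he).2⟩

lemma List.IsChain.rel_of_mem_edgesL {R : α → α → Prop} :
    ∀ {p : List α}, p.IsChain R → ∀ e ∈ edgesL p, R e.1 e.2
  | [], _, _, he | [_], _, _, he => by simp [edgesL] at he
  | _ :: _ :: _, h, _, he => by
    rw [List.isChain_cons_cons] at h
    rcases List.mem_cons.1 (edgesL_cons_cons _ _ _ ▸ he) with rfl | he
    · exact h.1
    · exact h.2.rel_of_mem_edgesL _ he

lemma exists_crossing_mem_edgesL (q : α → Prop) :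
    ∀ {p : List α} {s t : α}, p.head? = some s → p.getLast? = some t → q s → ¬ q t →
      ∃ e ∈ edgesL p, q e.1 ∧ ¬ q e.2
  | [], _, _, hs, _, _, _ => by simp at hs
  | [_], _, _, hs, ht, hqs, hqt => by simp_all
  | a :: b :: l, s, t, hs, ht, hqs, hqt => by
    obtain rfl : a = s := by simpa using hs
    by_cases hqb : q b
    · obtain ⟨e, he, hqe⟩ :=
        exists_crossing_mem_edgesL q (p := b :: l) rfl (by simpa using ht) hqb hqt
      exact ⟨e, by simp [he], hqe⟩
    · exact ⟨(a, b), by simp, hqs, hqb⟩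

end Paths

section Counting

variable {β γ : Type*}

lemma Multiset.nodup_map_of_pairwise {R : β → β → Prop} {m : Multiset β} (hm : m.Pairwise R)
    {E : β → γ} (hE : ∀ p ∈ m, ∀ q ∈ m, R p q → E p ≠ E q) : (m.map E).Nodup := by
  obtain ⟨l, rfl, hl⟩ := hm
  exact Multiset.coe_nodup.2 <|
    (hl.imp_of_mem fun hp hq => hE _ (Multiset.mem_coe.2 hp) _ (Multiset.mem_coe.2 hq)).map E
      fun _ _ => id

variable [DecidableEq γ] {m : Multiset β} {w : β → γ} {x : γ}

lemma Multiset.count_map_le_card_of_nodup (hm : m.Nodup) {s : Finset β}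
    (hs : ∀ e ∈ m, w e = x → e ∈ s) : (m.map w).count x ≤ s.card := by
  rw [Multiset.count_map, ← Multiset.toFinset_card_of_nodup (hm.filter _)]
  refine Finset.card_le_card fun e he => ?_
  rw [Multiset.mem_toFinset, Multiset.mem_filter] at he
  exact hs e he.1 he.2.symm

lemma Multiset.count_map_le_countP {q : β → Prop} [DecidablePred q]
    (hq : ∀ e ∈ m, w e = x → q e) : (m.map w).count x ≤ m.countP q := by
  rw [Multiset.count_map, Multiset.countP_eq_card_filter]
  refine Multiset.card_le_card ?_
  calc m.filter (x = w ·) = (m.filter (x = w ·)).filter q := by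
        refine (Multiset.filter_eq_self.2 fun e he => ?_).symm
        rw [Multiset.mem_filter] at he
        exact hq e he.1 he.2.symm
    _ ≤ m.filter q := Multiset.filter_le_filter _ (Multiset.filter_le _ _)

end Counting

lemma le_mul_sqrt_of_le_of_le_sq {k a r : ℝ} (hk : 0 ≤ k) (hr : 0 ≤ r) (hka : k ≤ a)
    (hkr : k ≤ r ^ 2) : k ≤ r * √a :=
  calc k = √k * √k := (Real.mul_self_sqrt hk).symm
    _ ≤ r * √a := mul_le_mul ((Real.sqrt_le_sqrt hkr).trans_eq (Real.sqrt_sq hr))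
        (Real.sqrt_le_sqrt hka) (Real.sqrt_nonneg _) hr

lemma card_le_mul_sum_sqrt {ι : Type*} [Fintype ι] [DecidableEq ι] (m : Multiset ι)
    (a : ι → ℕ) {r : ℝ} (hr : 0 ≤ r) (ha : ∀ x, m.count x ≤ a x)
    (hr2 : ∀ x, (m.count x : ℝ) ≤ r ^ 2) : (Multiset.card m : ℝ) ≤ r * ∑ x, √(a x : ℝ) := by
  rw [← Multiset.sum_count_eq_card (s := univ) (by simp), Finset.mul_sum]
  push_cast
  gcongr with x
  exact le_mul_sqrt_of_le_of_le_sq (Nat.cast_nonneg _) hr (by exact_mod_cast ha x) (hr2 x)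

section Hypercube

variable {d : ℕ}

lemma wt_lt_wt_of_hlt {x y : Vtx d} (h : hlt x y) : wt x < wt y := by
  refine Finset.card_lt_card (Finset.ssubset_iff_subset_ne.2 ⟨fun i => ?_, fun heq => h.2 ?_⟩)
  · simpa using h.1 i
  · funext i
    exact Bool.eq_iff_iff.2 (by simpa using congrArg (i ∈ ·) heq)

lemma MatchedFrom.card_eq {A B : Finset (Vtx d)} {φ : Vtx d → Vtx d} (h : MatchedFrom A B φ) :
    B.card = A.card := by
  have himg : A.image φ = B := Finset.coe_injective (by simpa using h.1.image_eq)
  rw [← himg, Finset.card_image_of_injOn h.1.injOn]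

lemma certOf_empty (S : Finset (Vtx d)) : CertOf S ∅ ∅ id 0 :=
  ⟨Finset.empty_subset _, by simp, rfl, by simp, by simp⟩

variable {S S' T' : Finset (Vtx d)} {φ : Vtx d → Vtx d} {n : ℕ}

lemma CertOf.insert (h : CertOf S S' T' φ n) {a b : Vtx d} (ha : a ∈ S) (hb : b ∉ S)
    (hab : hlt a b) (ha' : a ∉ S') (hb' : b ∉ T') :
    CertOf S (insert a S') (insert b T') (Function.update φ a b) (n + 1) := by
  obtain ⟨hSS, hT, hcard, hbij, hlt'⟩ := h
  have heq : Set.EqOn φ (Function.update φ a b) S' := fun s hs =>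
    (Function.update_of_ne (ne_of_mem_of_not_mem hs ha') _ _).symm
  refine ⟨Finset.insert_subset ha hSS, ?_, by rw [card_insert_of_notMem ha', hcard], ?_, ?_⟩
  · simpa [hb] using hT
  · simpa using (hbij.congr heq).insert (a := a) (by simpa using hb')
  · intro s hs
    rcases Finset.mem_insert.1 hs with rfl | hs
    · simpa using hab
    · simpa [← heq hs] using hlt' s hs

lemma CertOf.card_le_gap (h : CertOf S S' T' φ n) : (n : ℝ) ≤ gap S' φ := by
  obtain ⟨-, -, rfl, -, hlt⟩ := h
  rw [gap, Finset.card_eq_sum_ones, Nat.cast_sum]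
  refine Finset.sum_le_sum fun s hs => ?_
  have : (wt s : ℝ) + 1 ≤ wt (φ s) := by exact_mod_cast wt_lt_wt_of_hlt (hlt s hs)
  push_cast
  linarith

lemma exists_volIs (S : Finset (Vtx d)) : ∃ n, VolIs S n := by
  let HasCert : ℕ → Prop := fun m => ∃ S' T' φ, CertOf S S' T' φ m
  have hbdd : ∀ m, HasCert m → m ≤ Fintype.card (Vtx d) := by
    rintro m ⟨S', -, -, -, -, rfl, -⟩
    exact S'.card_le_univ
  exact ⟨Nat.findGreatest HasCert (Fintype.card (Vtx d)),
    Nat.findGreatest_spec (P := HasCert) (Nat.zero_le _) ⟨∅, ∅, id, certOf_empty S⟩,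
    fun m S' T' φ h => Nat.le_findGreatest (hbdd m ⟨S', T', φ, h⟩) ⟨S', T', φ, h⟩⟩

lemma VolIs.exists_sepIs (hvol : VolIs S n) (hn : 0 < n) : ∃ r, 1 ≤ r ∧ SepIs S n r := by
  obtain ⟨S', T', φ, h⟩ := hvol.1
  obtain ⟨⟨S₀, T₀, φ₀⟩, h₀, hmin⟩ :=
    Set.exists_min_image {c : Finset (Vtx d) × Finset (Vtx d) × (Vtx d → Vtx d) |
      CertOf S c.1 c.2.1 c.2.2 n} (fun c => gap c.1 c.2.2) (Set.toFinite _) ⟨(S', T', φ), h⟩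
  have hn' : (0 : ℝ) < n := by exact_mod_cast hn
  refine ⟨gap S₀ φ₀ / n, ?_, ⟨S₀, T₀, φ₀, h₀, ?_⟩, fun S' T' φ h => ?_⟩
  · rw [one_le_div hn']
    exact CertOf.card_le_gap h₀
  · rw [div_mul_cancel₀ _ hn'.ne']
  · rw [div_mul_cancel₀ _ hn'.ne']
    exact hmin (S', T', φ) h

lemma VolIs.mem_or_mem_of_hlt (hvol : VolIs S n) (hc : CertOf S S' T' φ n) {a b : Vtx d}
    (ha : a ∈ S) (hb : b ∉ S) (hab : hlt a b) : a ∈ S' ∨ b ∈ T' := by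
  by_contra! h
  have := hvol.2 _ _ _ _ (hc.insert ha hb hab h.1 h.2)
  omega

def trueSet (f : Vtx d → Bool) : Finset (Vtx d) := univ.filter (fun x => f x = true)

@[simp] lemma mem_trueSet {f : Vtx d → Bool} {x : Vtx d} : x ∈ trueSet f ↔ f x = true := by
  simp [trueSet]

/-- The witness is the upward closure of the ones of `f` lying outside a maximum matching. -/
lemma VolIs.exists_monotoneB_card_ne_le {f : Vtx d → Bool} (hvol : VolIs (trueSet f) n) :
    ∃ g : Vtx d → Bool, MonotoneB g ∧ (univ.filter fun x => f x ≠ g x).card ≤ 2 * n := by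
  obtain ⟨S', T', φ, hc⟩ := hvol.1
  let g : Vtx d → Bool := fun x => decide (∃ y, hle y x ∧ y ∉ S' ∪ T' ∧ f y = true)
  have hg : MonotoneB g := by
    intro x y hxy hx
    obtain ⟨z, hzx, hz⟩ := of_decide_eq_true hx
    exact decide_eq_true ⟨z, fun i hi => hxy i (hzx i hi), hz⟩
  have hsub : univ.filter (fun x => f x ≠ g x) ⊆ S' ∪ T' := by
    intro x hx
    by_contra hxU
    refine (Finset.mem_filter.1 hx).2 ?_
    cases hfx : f x
    · refine (decide_eq_false fun ⟨y, hyx, hyU, hfy⟩ => ?_).symm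
      have hyx' : hlt y x := ⟨hyx, by rintro rfl; simp [hfx] at hfy⟩
      rcases hvol.mem_or_mem_of_hlt hc (by simpa using hfy) (by simpa using hfx) hyx' with h | h
      · exact hyU (Finset.mem_union_left _ h)
      · exact hxU (Finset.mem_union_right _ h)
    · exact (decide_eq_true ⟨x, fun _ => id, hxU, hfx⟩).symm
  refine ⟨g, hg, (card_le_card hsub).trans ((card_union_le _ _).trans ?_)⟩
  rw [hc.2.2.2.card_eq, hc.2.2.1]
  omega

def Violated (f : Vtx d → Bool) (e : Vtx d × Vtx d) : Prop :=
  IsEdge e.1 e.2 ∧ f e.1 = true ∧ f e.2 = false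

def chargedEnd (χ : Vtx d × Vtx d → Bool) (e : Vtx d × Vtx d) : Vtx d :=
  if χ e then e.1 else e.2

lemma Violated.chargedEnd_spec {f : Vtx d → Bool} {e : Vtx d × Vtx d} (he : Violated f e)
    (χ : Vtx d × Vtx d → Bool) :
    (e.1 = chargedEnd χ e ∨ e.2 = chargedEnd χ e) ∧ χ e = f (chargedEnd χ e) := by
  unfold chargedEnd
  cases χ e <;> simp [he.2.1, he.2.2]

lemma card_le_mul_sum_sqrt_colInf {f : Vtx d → Bool} (χ : Vtx d × Vtx d → Bool)
    {P : Multiset (List (Vtx d))} {r : ℝ} (hr : 0 ≤ r)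
    (hpaths : ∀ p ∈ P, p.IsChain IsEdge ∧ (∃ s ∈ trueSet f, p.head? = some s) ∧
      ∃ t, p.getLast? = some t ∧ t ∉ trueSet f)
    (hdisj : P.Pairwise fun p q => ∀ e ∈ edgesL p, e ∉ edgesL q)
    (hload : ∀ v, (P.countP (fun p => v ∈ p) : ℝ) ≤ r ^ 2) :
    (Multiset.card P : ℝ) ≤ r * ∑ x, √(colInf f χ x : ℝ) := by
  have hcross : ∀ p ∈ P, ∃ e ∈ edgesL p, Violated f e := by
    intro p hp
    obtain ⟨hchain, ⟨s, hs, hps⟩, t, hpt, ht⟩ := hpaths p hp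
    obtain ⟨e, he, he₁, he₂⟩ :=
      exists_crossing_mem_edgesL (· ∈ trueSet f) hps hpt hs ht
    exact ⟨e, he, hchain.rel_of_mem_edgesL e he, by simpa using he₁, by simpa using he₂⟩
  choose! E hE hEv using hcross
  have hnodup : (P.map E).Nodup :=
    Multiset.nodup_map_of_pairwise hdisj fun p hp q hq hpq heq => hpq _ (hE p hp) (heq ▸ hE q hq)
  have := card_le_mul_sum_sqrt ((P.map E).map (chargedEnd χ)) (colInf f χ) hr
    (fun x => Multiset.count_map_le_card_of_nodup hnodup fun e he hex => ?_)
    (fun x => le_trans ?_ (hload x))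
  · simpa using this
  · obtain ⟨p, hp, rfl⟩ := Multiset.mem_map.1 he
    obtain ⟨hends, hcol⟩ := (hEv p hp).chargedEnd_spec χ
    obtain ⟨hedge, hf₁, hf₂⟩ := hEv p hp
    subst hex
    simp [hedge, hf₁, hf₂, hends, hcol]
  · rw [Multiset.map_map]
    refine mod_cast Multiset.count_map_le_countP fun p hp hpx => ?_
    rw [← hpx, Function.comp_apply]
    obtain h | h := ((hEv p hp).chargedEnd_spec χ).1
    · exact h ▸ (mem_of_mem_edgesL (hE p hp)).1
    · exact h ▸ (mem_of_mem_edgesL (hE p hp)).2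

end Hypercube

/-- **The routing conjecture implies the robust directed Talagrand inequality (KMS).**
If for every `S` of separation distance `r ≥ 1` the hypercube flow network with unit edge
capacities and vertex capacities `r²` carries at least `C·r·vol⁺(S)` units of flow from `S`
to its complement (formulated via a path decomposition), then for every `f` and every edge
bicoloring `χ`, `2^{-d} ∑_x √(Inf⁺χ_f(x)) ≥ (C/2)·ε_f`. -/
theorem routing_conjecture_implies_robust_talagrand (d : ℕ) (C : ℝ) (hC : 0 < C)
    (hrout : ∀ (S : Finset (Vtx d)) (n : ℕ) (r : ℝ), 1 ≤ r →
      VolIs S n → SepIs S n r →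
      ∃ P : Multiset (List (Vtx d)),
        (∀ p ∈ P, p.Chain' IsEdge ∧
          (∃ s ∈ S, p.head? = some s) ∧ (∃ t, p.getLast? = some t ∧ t ∉ S)) ∧
        P.Pairwise (fun p q => ∀ e ∈ edgesL p, e ∉ edgesL q) ∧
        (∀ v : Vtx d, ((P.countP (fun p => v ∈ p) : ℕ) : ℝ) ≤ r ^ 2) ∧
        C * r * n ≤ (Multiset.card P : ℝ)) :
    ∀ (f : Vtx d → Bool) (χ : Vtx d × Vtx d → Bool) (ε : ℝ),
      (∃ g : Vtx d → Bool, MonotoneB g ∧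
        ((Finset.univ.filter (fun x => f x ≠ g x)).card : ℝ) / 2 ^ d = ε) →
      (∀ g : Vtx d → Bool, MonotoneB g →
        ε ≤ ((Finset.univ.filter (fun x => f x ≠ g x)).card : ℝ) / 2 ^ d) →
      ((2 : ℝ) ^ d)⁻¹ * ∑ x : Vtx d, Real.sqrt (colInf f χ x) ≥ (C / 2) * ε := by
  intro f χ ε _ hmin
  obtain ⟨n, hvol⟩ := exists_volIs (trueSet f)
  have hε : ε ≤ 2 * n / 2 ^ d := by
    obtain ⟨g, hg, hcard⟩ := hvol.exists_monotoneB_card_ne_le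
    refine (hmin g hg).trans ?_
    gcongr
    exact_mod_cast hcard
  have hflow : C * n ≤ ∑ x, √(colInf f χ x : ℝ) := by
    rcases Nat.eq_zero_or_pos n with rfl | hn
    · simpa using Finset.sum_nonneg fun x _ => Real.sqrt_nonneg (colInf f χ x)
    obtain ⟨r, hr, hsep⟩ := hvol.exists_sepIs hn
    obtain ⟨P, hpaths, hdisj, hload, hcard⟩ := hrout _ n r hr hvol hsep
    have := hcard.trans (card_le_mul_sum_sqrt_colInf χ (by linarith) hpaths hdisj hload)
    rw [mul_right_comm, mul_comm r] at this
    exact le_of_mul_le_mul_right this (by linarith)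
  calc (C / 2) * ε ≤ (C / 2) * (2 * n / 2 ^ d) := by gcongr
    _ = C * n / 2 ^ d := by ring
    _ ≤ _ := by rw [inv_mul_eq_div]; gcongr
end

section
/- Let $f:\{0,1\}^d \to \{0,1\}$ with $S = f^{-1}(1)$, and let $(S',T';\phi)$ be a matched pair with $S' \subseteq S$ and $T' \subseteq \overline{S}$. Then the number of violated edges of $f$ is at least $|S'|$. (Equivalently: any set of hypercube edges whose removal disconnects $S$ from $\overline{S}$ in the directed sense and which contains all violated edges has size at least the directed volume of $S$.) -/
open scoped Classical

open Finset

lemma hle_iff_le {d : ℕ} {x y : Vtx d} : hle x y ↔ x ≤ y := by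
  simp only [hle, Pi.le_def, Bool.le_iff_imp]

lemma wt_cons {d : ℕ} (b : Bool) (x : Vtx d) : wt (Fin.cons b x : Vtx (d + 1)) = b.toNat + wt x := by
  simp only [wt, card_filter, Fin.sum_univ_succ, Fin.cons_zero, Fin.cons_succ]
  cases b <;> rfl

lemma isEdge_cons {d : ℕ} {x y : Vtx d} (b : Bool) (h : IsEdge x y) :
    IsEdge (Fin.cons b x : Vtx (d + 1)) (Fin.cons b y) := by
  refine ⟨hle_iff_le.2 (Fin.cons_le_cons.2 ⟨le_rfl, hle_iff_le.1 h.1⟩), ?_⟩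
  rw [wt_cons, wt_cons, h.2, add_assoc]

lemma isEdge_cons_false_cons_true {d : ℕ} (x : Vtx d) :
    IsEdge (Fin.cons false x : Vtx (d + 1)) (Fin.cons true x) := by
  refine ⟨hle_iff_le.2 (Fin.cons_le_cons.2 ⟨Bool.false_le _, le_rfl⟩), ?_⟩
  rw [wt_cons, wt_cons, Bool.toNat_true, Bool.toNat_false, zero_add, add_comm]

/-- The function on `Vtx (d + 1)` that is `h₀` on the face `x 0 = false` and `h₁` on the face
`x 0 = true`. -/
def glue {d : ℕ} {α : Type*} (h₀ h₁ : Vtx d → α) : Vtx (d + 1) → α :=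
  Fin.consCases fun b x => cond b (h₁ x) (h₀ x)

section Glue

variable {d : ℕ} {α : Type*}

@[simp]
lemma glue_cons (h₀ h₁ : Vtx d → α) (b : Bool) (x : Vtx d) :
    glue h₀ h₁ (Fin.cons b x) = cond b (h₁ x) (h₀ x) :=
  Fin.consCases_cons _ _ _

lemma glue_faces (f : Vtx (d + 1) → α) :
    glue (fun x => f (Fin.cons false x)) (fun x => f (Fin.cons true x)) = f := by
  funext z
  induction z using Fin.consCases with
  | cons b x => cases b <;> rfl

lemma monotone_glue [Preorder α] {h₀ h₁ : Vtx d → α} (hm₀ : Monotone h₀) (hm₁ : Monotone h₁)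
    (h₀₁ : h₀ ≤ h₁) : Monotone (glue h₀ h₁) := by
  intro z w hzw
  induction z using Fin.consCases with | cons b x => ?_
  induction w using Fin.consCases with | cons c y => ?_
  obtain ⟨hbc, hxy⟩ := Fin.cons_le_cons.1 hzw
  cases b <;> cases c
  · exact hm₀ hxy
  · exact (hm₀ hxy).trans (h₀₁ y)
  · exact absurd hbc (by decide)
  · exact hm₁ hxy

lemma sum_vtx_succ {M : Type*} [AddCommMonoid M] (F : Vtx (d + 1) → M) :
    ∑ z, F z = ∑ x, F (Fin.cons false x) + ∑ x, F (Fin.cons true x) := by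
  rw [← Fintype.sum_equiv (Fin.consEquiv fun _ => Bool) (fun p => F (Fin.cons p.1 p.2)) F
    fun _ => rfl, Fintype.sum_prod_type, Fintype.sum_bool, add_comm]

lemma hammingDist_glue [DecidableEq α] (f₀ f₁ g₀ g₁ : Vtx d → α) :
    hammingDist (glue f₀ f₁) (glue g₀ g₁) = hammingDist f₀ g₀ + hammingDist f₁ g₁ := by
  simp only [hammingDist, card_filter, sum_vtx_succ, glue_cons, cond_false, cond_true]

end Glue

lemma card_violatedEdges_glue {d : ℕ} (f₀ f₁ : Vtx d → Bool) :
    #(violatedEdges d f₀) + #(violatedEdges d f₁) + #{x | f₀ x = true ∧ f₁ x = false}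
      ≤ #(violatedEdges (d + 1) (glue f₀ f₁)) := by
  let lift : (Vtx d × Vtx d ⊕ Vtx d × Vtx d) ⊕ Vtx d → Vtx (d + 1) × Vtx (d + 1)
    | .inl (.inl e) => (Fin.cons false e.1, Fin.cons false e.2)
    | .inl (.inr e) => (Fin.cons true e.1, Fin.cons true e.2)
    | .inr x => (Fin.cons false x, Fin.cons true x)
  have hlift : Function.Injective lift := by
    rintro ((a | a) | a) ((b | b) | b) h <;> simp_all [lift, Prod.ext_iff, Fin.cons_inj]
  rw [← card_disjSum, ← card_disjSum]
  refine card_le_card_of_injOn lift ?_ hlift.injOn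
  rintro ((e | e) | x) he <;>
    simp only [mem_coe, inl_mem_disjSum, inr_mem_disjSum, violatedEdges, mem_filter, mem_univ,
      true_and, lift, glue_cons, cond_false, cond_true] at he ⊢
  · exact ⟨isEdge_cons false he.1, he.2⟩
  · exact ⟨isEdge_cons true he.1, he.2⟩
  · exact ⟨isEdge_cons_false_cons_true x, he⟩

lemma hammingDist_inf_add_hammingDist_sup_le {ι : Type*} [Fintype ι] (f₀ f₁ g₀ g₁ : ι → Bool) :
    hammingDist f₀ (g₀ ⊓ g₁) + hammingDist f₁ (g₀ ⊔ g₁)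
      ≤ hammingDist f₀ g₀ + hammingDist f₁ g₁ + 2 * #{x | f₀ x = true ∧ f₁ x = false} := by
  simp only [hammingDist, card_filter, mul_sum, ← sum_add_distrib, Pi.inf_apply, Pi.sup_apply]
  refine sum_le_sum fun x _ => ?_
  cases f₀ x <;> cases f₁ x <;> cases g₀ x <;> cases g₁ x <;> decide

theorem exists_monotone_hammingDist_le_card_violatedEdges (d : ℕ) (f : Vtx d → Bool) :
    ∃ g : Vtx d → Bool, Monotone g ∧ hammingDist f g ≤ #(violatedEdges d f) := by
  induction d with
  | zero => exact ⟨f, Subsingleton.monotone f, by simp⟩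
  | succ d ih =>
    obtain ⟨f₀, f₁, rfl⟩ : ∃ f₀ f₁, glue f₀ f₁ = f := ⟨_, _, glue_faces f⟩
    obtain ⟨g₀, hg₀, hd₀⟩ := ih f₀
    obtain ⟨g₁, hg₁, hd₁⟩ := ih f₁
    have hviol := card_violatedEdges_glue f₀ f₁
    have havg := hammingDist_inf_add_hammingDist_sup_le f₀ f₁ g₀ g₁
    by_cases h : hammingDist f₀ g₀ + hammingDist f₁ (g₀ ⊔ g₁)
        ≤ hammingDist f₀ (g₀ ⊓ g₁) + hammingDist f₁ g₁
    · refine ⟨glue g₀ (g₀ ⊔ g₁), monotone_glue hg₀ (hg₀.sup hg₁) le_sup_left, ?_⟩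
      rw [hammingDist_glue]
      omega
    · refine ⟨glue (g₀ ⊓ g₁) g₁, monotone_glue (hg₀.inf hg₁) hg₁ inf_le_right, ?_⟩
      rw [hammingDist_glue]
      omega

/-- A monotone `g` must disagree with `f` at `s` (if `g s = false`) or at `φ s` (if
`g s = true`, so that `g (φ s) = true`); this choice is injective on `S'`. -/
lemma card_le_hammingDist_of_matchedFrom {d : ℕ} {f g : Vtx d → Bool} (hg : Monotone g)
    {S' T' : Finset (Vtx d)} (hS' : ∀ s ∈ S', f s = true) (hT' : ∀ t ∈ T', f t = false)
    {φ : Vtx d → Vtx d} (hmp : MatchedFrom S' T' φ) : #S' ≤ hammingDist f g := by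
  have hfφ : ∀ s ∈ S', f (φ s) = false := fun s hs => hT' _ (hmp.1.mapsTo hs)
  refine card_le_card_of_injOn (fun s => if g s then φ s else s) (fun s hs => ?_) ?_
  · have hs : s ∈ S' := hs
    simp only [mem_coe, mem_filter, mem_univ, true_and]
    by_cases hgs : g s = true
    · rw [if_pos hgs, hfφ s hs, hg (hle_iff_le.1 (hmp.2 s hs).1) hgs]
      decide
    · rw [if_neg hgs, hS' s hs]
      exact fun h => hgs h.symm
  · intro s₁ hs₁ s₂ hs₂ h
    have hφ₁ := hfφ s₁ hs₁
    have hφ₂ := hfφ s₂ hs₂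
    have hf₁ := hS' s₁ hs₁
    have hf₂ := hS' s₂ hs₂
    by_cases hg₁ : g s₁ = true <;> by_cases hg₂ : g s₂ = true <;>
      simp only [hg₁, hg₂, if_true, if_false, Bool.false_eq_true] at h
    · exact hmp.1.injOn hs₁ hs₂ h
    · simp_all
    · simp_all
    · exact h

/-- **Violated edges dominate certificates.** If `(S',T';φ)` is a matched pair with
`S' ⊆ f⁻¹(1)` and `T' ⊆ f⁻¹(0)`, then `f` has at least `|S'|` violated edges. -/
theorem violated_edges_ge_certificate (d : ℕ) (f : Vtx d → Bool)
    (S' T' : Finset (Vtx d))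
    (hS' : ∀ s ∈ S', f s = true) (hT' : ∀ t ∈ T', f t = false)
    (φ : Vtx d → Vtx d) (hmp : MatchedFrom S' T' φ) :
    S'.card ≤ (violatedEdges d f).card := by
  obtain ⟨g, hg, hdist⟩ := exists_monotone_hammingDist_le_card_violatedEdges d f
  exact (card_le_hammingDist_of_matchedFrom hg hS' hT' hmp).trans hdist
end
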